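/- arXiv:2402.18666 — 3 statements merged into one kernel-verified Lean document; each statement's English description precedes it below -/
import Mathlib

section
/- Almost surely, (1/(m·p(m)))·tr(Ā_m A_mᵀ) − (1/(m·p(m)))·tr(A_m A_mᵀ) → 0 as m → ∞. -/
/-!
The difference is the centred linear statistic `(σ/√n)/(m p) · ∑ A_ij e_ij`, whose variance is
`(σ²/n) (m p)⁻² tr(A Aᵀ) ≤ (σ²/n) C / (m p)`. Since `m / p` is eventually bounded, `1 / (m p)`
is `O(1 / m²)`, so these variances are summable, and Chebyshev's inequality with Borel–Cantelli
gives almost sure convergence to `0`.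
-/

open MeasureTheory ProbabilityTheory Filter Matrix

lemma Matrix.trace_mul_transpose_eq_sum {m n R : Type*} [Fintype m] [Fintype n]
    [CommSemiring R] (M N : Matrix m n R) :
    (M * Nᵀ).trace = ∑ i, ∑ j, M i j * N i j := by
  simp [trace, mul_apply]

lemma Matrix.trace_add_smul_mul_transpose_sub {m n R : Type*} [Fintype m] [Fintype n]
    [CommRing R] (M E : Matrix m n R) (κ : R) :
    ((M + κ • E) * Mᵀ).trace - (M * Mᵀ).trace = ∑ i, ∑ j, κ * M i j * E i j := by
  rw [Matrix.add_mul, trace_add, add_sub_cancel_left, Matrix.smul_mul, trace_smul, smul_eq_mul,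
    trace_mul_transpose_eq_sum, Finset.mul_sum]
  exact Finset.sum_congr rfl fun i _ => by rw [Finset.mul_sum]; simp only [mul_comm, mul_left_comm]

lemma summable_one_div_mul_of_tendsto_div {p : ℕ → ℕ} {c : ℝ}
    (hp : Tendsto (fun m : ℕ => (m : ℝ) / p m) atTop (nhds c)) :
    Summable fun m : ℕ => 1 / ((m : ℝ) * p m) := by
  refine Summable.of_norm_bounded_eventually_nat
    ((Real.summable_one_div_nat_pow.2 one_lt_two).mul_left (c + 1)) ?_
  filter_upwards [hp.eventually (eventually_le_nhds (lt_add_one c))] with m hm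
  -- `1 / (m p) = (m / p) / m²` holds even when `m` or `p m` is `0`, by the junk value of `x / 0`.
  have hsplit : 1 / ((m : ℝ) * p m) = (m : ℝ) / p m * (1 / (m : ℝ) ^ 2) := by
    rcases eq_or_ne (m : ℝ) 0 with h | h
    · simp [h]
    · field_simp
  rw [Real.norm_of_nonneg (by positivity), hsplit]
  exact mul_le_mul_of_nonneg_right hm (by positivity)

section Probability

variable {Ω : Type*} {mΩ : MeasurableSpace Ω} {μ : Measure Ω}

lemma variance_sum_mul_of_pairwise_indepFun {ι : Type*} [Fintype ι] {X : ι → Ω → ℝ}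
    (a : ι → ℝ) (hX : ∀ i, MemLp (X i) 2 μ)
    (hindep : Pairwise fun i j => IndepFun (X i) (X j) μ) :
    variance (fun ω => ∑ i, a i * X i ω) μ = ∑ i, a i ^ 2 * variance (X i) μ := by
  have h := IndepFun.variance_sum (μ := μ) (s := Finset.univ) (X := fun i ω => a i * X i ω)
    (fun i _ => (hX i).const_mul (a i))
    (fun i _ j _ hij => (hindep hij).comp (measurable_const_mul _) (measurable_const_mul _))
  simpa only [Finset.sum_fn, variance_const_mul] using h

lemma ae_tendsto_zero_of_tsum_measure_ne_top {Y : ℕ → Ω → ℝ}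
    (h : ∀ ε > 0, ∑' m, μ {ω | ε ≤ |Y m ω|} ≠ ⊤) :
    ∀ᵐ ω ∂μ, Tendsto (fun m => Y m ω) atTop (nhds 0) := by
  have hae : ∀ k : ℕ, ∀ᵐ ω ∂μ, ∀ᶠ m in atTop, ω ∉ {ω | 1 / ((k : ℝ) + 1) ≤ |Y m ω|} :=
    fun k => ae_eventually_notMem (h _ Nat.one_div_pos_of_nat)
  filter_upwards [ae_all_iff.2 hae] with ω hω
  rw [NormedAddGroup.tendsto_nhds_zero]
  intro ε hε
  obtain ⟨k, hk⟩ := exists_nat_one_div_lt hε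
  filter_upwards [hω k] with m hm
  exact (not_le.1 hm).trans hk

lemma ae_tendsto_sub_integral_of_summable_variance [IsFiniteMeasure μ] {Y : ℕ → Ω → ℝ}
    (hY : ∀ m, MemLp (Y m) 2 μ) (hsum : Summable fun m => variance (Y m) μ) :
    ∀ᵐ ω ∂μ, Tendsto (fun m => Y m ω - μ[Y m]) atTop (nhds 0) := by
  refine ae_tendsto_zero_of_tsum_measure_ne_top fun ε hε => ?_
  have hcheb : ∀ m, μ {ω | ε ≤ |Y m ω - μ[Y m]|} ≤ ENNReal.ofReal (variance (Y m) μ / ε ^ 2) :=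
    fun m => meas_ge_le_variance_div_sq (hY m) hε
  refine ne_top_of_le_ne_top ?_ (ENNReal.tsum_le_tsum hcheb)
  rw [← ENNReal.ofReal_tsum_of_nonneg (fun m => div_nonneg (variance_nonneg _ _) (sq_nonneg ε))
    (hsum.div_const _)]
  exact ENNReal.ofReal_ne_top

lemma ae_tendsto_sum_mul_of_summable_sum_sq_mul_variance [IsFiniteMeasure μ]
    {ι : ℕ → Type*} [∀ m, Fintype (ι m)] {X : ∀ m, ι m → Ω → ℝ} (a : ∀ m, ι m → ℝ)
    (hX : ∀ m i, MemLp (X m i) 2 μ)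
    (hindep : ∀ m, Pairwise fun i j => IndepFun (X m i) (X m j) μ)
    (hmean : ∀ m i, μ[X m i] = 0)
    (hsum : Summable fun m => ∑ i, a m i ^ 2 * variance (X m i) μ) :
    ∀ᵐ ω ∂μ, Tendsto (fun m => ∑ i, a m i * X m i ω) atTop (nhds 0) := by
  have hY : ∀ m, MemLp (fun ω => ∑ i, a m i * X m i ω) 2 μ := fun m =>
    memLp_finsetSum _ fun i _ => (hX m i).const_mul (a m i)
  have hYmean : ∀ m, μ[fun ω => ∑ i, a m i * X m i ω] = 0 := fun m => by
    simp [integral_finsetSum _ fun i _ => ((hX m i).integrable one_le_two).const_mul (a m i),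
      integral_const_mul, hmean]
  have h := ae_tendsto_sub_integral_of_summable_variance hY (by
    simpa only [variance_sum_mul_of_pairwise_indepFun _ (hX _) (hindep _)] using hsum)
  simpa only [hYmean, sub_zero] using h

end Probability

theorem stmt2_general
    {Ω : Type*} [MeasureSpace Ω] [IsProbabilityMeasure (ℙ : Measure Ω)]
    (c : ℝ)
    (p : ℕ → ℕ)
    (hp : Tendsto (fun m : ℕ => (m : ℝ) / (p m : ℝ)) atTop (nhds c))
    (e : ℕ → ℕ → Ω → ℝ)
    (hindep : iIndepFun (fun q : ℕ × ℕ => e q.1 q.2) ℙ)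
    (hint : ∀ i j, Integrable (e i j))
    (hsq : ∀ i j, Integrable (fun ω => (e i j ω) ^ 2))
    (hmean : ∀ i j, ∫ ω, e i j ω = 0)
    (hvar : ∀ i j, ∫ ω, (e i j ω) ^ 2 = 1)
    (A : ∀ m : ℕ, Matrix (Fin m) (Fin (p m)) ℝ)
    (hA : ∃ C : ℝ, ∀ m : ℕ, (1 / (m * p m : ℝ)) * (A m * (A m)ᵀ).trace ≤ C)
    (n : ℕ) (σ : ℝ)
    (Abar : ∀ m : ℕ, Ω → Matrix (Fin m) (Fin (p m)) ℝ)
    (hAbar : ∀ m ω, Abar m ω =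
      A m + (σ / Real.sqrt n) • Matrix.of fun i j => e i.val j.val ω) :
    ∀ᵐ ω, Tendsto
      (fun m : ℕ => (1 / (m * p m : ℝ)) * (Abar m ω * (A m)ᵀ).trace - (1 / (m * p m : ℝ)) * (A m * (A m)ᵀ).trace)
      atTop (nhds 0) := by
  obtain ⟨C, hC⟩ := hA
  set a : ∀ m, Fin m × Fin (p m) → ℝ :=
    fun m q => σ / Real.sqrt n * (1 / (m * p m : ℝ)) * A m q.1 q.2
  have hdiff : ∀ m ω, (1 / (m * p m : ℝ)) * (Abar m ω * (A m)ᵀ).trace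
      - (1 / (m * p m : ℝ)) * (A m * (A m)ᵀ).trace = ∑ q, a m q * e q.1 q.2 ω := by
    intro m ω
    rw [← mul_sub, hAbar, trace_add_smul_mul_transpose_sub, Fintype.sum_prod_type, Finset.mul_sum]
    simp only [a, Finset.mul_sum, of_apply]
    exact Finset.sum_congr rfl fun i _ => Finset.sum_congr rfl fun j _ => by ring
  have hL2 : ∀ i j, MemLp (e i j) 2 ℙ := fun i j =>
    (memLp_two_iff_integrable_sq (hint i j).aestronglyMeasurable).2 (hsq i j)
  have hvariance : ∀ i j, variance (e i j) ℙ = 1 := fun i j => by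
    simp [variance_eq_sub (hL2 i j), hvar, hmean]
  have hsum_sq : ∀ m, ∑ q, a m q ^ 2 = (σ / Real.sqrt n) ^ 2 * (1 / (m * p m : ℝ))
      * ((1 / (m * p m : ℝ)) * (A m * (A m)ᵀ).trace) := fun m => by
    simp only [a, trace_mul_transpose_eq_sum, Fintype.sum_prod_type, Finset.mul_sum]
    exact Finset.sum_congr rfl fun i _ => Finset.sum_congr rfl fun j _ => by ring
  have hsum : Summable fun m => ∑ q, a m q ^ 2 * variance (e q.1 q.2) ℙ := by
    simp only [hvariance, mul_one, hsum_sq]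
    refine Summable.of_nonneg_of_le (fun m => ?_) (fun m => ?_)
      (((summable_one_div_mul_of_tendsto_div hp).mul_left ((σ / Real.sqrt n) ^ 2)).mul_right C)
    · rw [← hsum_sq]; positivity
    · exact mul_le_mul_of_nonneg_left (hC m) (by positivity)
  filter_upwards [ae_tendsto_sum_mul_of_summable_sum_sq_mul_variance a (fun m q => hL2 q.1 q.2)
    (fun m q r hqr => hindep.indepFun ((Fin.val_injective.prodMap Fin.val_injective).ne hqr))
    (fun m q => hmean q.1 q.2) hsum] with ω hω
  simpa only [hdiff] using hω

/-- a.s. (1/(mp))·tr(Ā_m A_mᵀ) − (1/(mp))·tr(A_m A_mᵀ) → 0 as m → ∞. -/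
theorem stmt2
    {Ω : Type*} [MeasureSpace Ω] [IsProbabilityMeasure (ℙ : Measure Ω)]
    (c : ℝ) (hc : 0 < c)
    (p : ℕ → ℕ)
    (hp : Tendsto (fun m : ℕ => (m : ℝ) / (p m : ℝ)) atTop (nhds c))
    (e : ℕ → ℕ → Ω → ℝ)
    (hmeas : ∀ i j, Measurable (e i j))
    (hindep : iIndepFun (fun q : ℕ × ℕ => e q.1 q.2) ℙ)
    (hident : ∀ i j, IdentDistrib (e i j) (e 0 0) ℙ ℙ)
    (hint : ∀ i j, Integrable (e i j))
    (hsq : ∀ i j, Integrable (fun ω => (e i j ω) ^ 2))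
    (hmean : ∀ i j, ∫ ω, e i j ω = 0)
    (hvar : ∀ i j, ∫ ω, (e i j ω) ^ 2 = 1)
    (hmom4 : ∀ i j, Integrable (fun ω => (e i j ω) ^ 4))
    (A : ∀ m : ℕ, Matrix (Fin m) (Fin (p m)) ℝ)
    (hA : ∃ C : ℝ, ∀ m : ℕ, (1 / (m * p m : ℝ)) * (A m * (A m)ᵀ).trace ≤ C)
    (U : ∀ m : ℕ, Matrix (Fin m) (Fin (p m)) ℝ)
    (hU : ∀ m i j, U m i j = 1)
    (n : ℕ) (hn : 2 ≤ n) (σ : ℝ) (hσ : 0 < σ)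
    (Abar : ∀ m : ℕ, Ω → Matrix (Fin m) (Fin (p m)) ℝ)
    (hAbar : ∀ m ω, Abar m ω =
      A m + (σ / Real.sqrt n) • Matrix.of fun i j => e i.val j.val ω) :
    ∀ᵐ ω, Tendsto
      (fun m : ℕ => (1 / (m * p m : ℝ)) * (Abar m ω * (A m)ᵀ).trace - (1 / (m * p m : ℝ)) * (A m * (A m)ᵀ).trace)
      atTop (nhds 0) :=
  stmt2_general c p hp e hindep hint hsq hmean hvar A hA n σ Abar hAbar
end

section
/- Almost surely, (1/(m·p(m)))·tr(Ā_m U_mᵀ) − (1/(m·p(m)))·tr(A_m U_mᵀ) → 0 as m → ∞. -/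
open MeasureTheory ProbabilityTheory Filter Matrix
open scoped Topology

/-!
The difference equals `(m p √n)⁻¹ ∑ₖ ∑ⱼ wₖ eₖⱼ` with `wₖ = ∑ᵢ (Σ^{1/2})ᵢₖ`, and by
Cauchy–Schwarz `∑ₖ wₖ² ≤ m tr(Σ^{1/2} Σ^{1/2}) = m tr Σ = O(m²)`. For independent centred
variables the fourth moment of a sum is at most `K + 3` times the square of its variance, `K`
bounding the normalised fourth moments, so the fourth moment of the difference is
`O(p⁻²) = O(m⁻²)`. These are summable, hence almost surely the fourth powers of the differences
are summable and the differences tend to zero.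
-/

section Moments

variable {Ω : Type*} [MeasurableSpace Ω] {μ : Measure Ω}

lemma MeasureTheory.MemLp.integrable_pow_of_le [IsFiniteMeasure μ] {f : Ω → ℝ} {N k : ℕ}
    (hf : MemLp f N μ) (hk : k ≤ N) : Integrable (fun ω => f ω ^ k) μ := by
  refine (integrable_norm_iff (hf.1.pow k)).mp ?_
  simpa only [Pi.pow_apply, norm_pow] using
    integrable_norm_pow_of_le hf.1 hk hf.integrable_norm_pow'

lemma MeasureTheory.memLp_of_integrable_abs_rpow [IsFiniteMeasure μ] {f : Ω → ℝ}
    (hf : AEStronglyMeasurable f μ) {N : ℕ} {q : ℝ} (hN : N ≠ 0) (hNq : N ≤ q)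
    (h : Integrable (fun ω => |f ω| ^ q) μ) : MemLp f N μ := by
  have hN' := integrable_norm_rpow_of_le hf (Nat.cast_nonneg N) ((Nat.cast_nonneg N).trans hNq)
    hNq (by simpa only [Real.norm_eq_abs] using h)
  exact (integrable_norm_rpow_iff hf (by exact_mod_cast hN) (ENNReal.natCast_ne_top N)).mp
    (by simpa only [ENNReal.toReal_natCast] using hN')

lemma ProbabilityTheory.IndepFun.integral_add_pow [IsFiniteMeasure μ] {S T : Ω → ℝ} {N : ℕ}
    (hST : IndepFun S T μ) (hS : MemLp S N μ) (hT : MemLp T N μ) :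
    ∫ ω, (S ω + T ω) ^ N ∂μ =
      ∑ k ∈ Finset.range (N + 1), (∫ ω, S ω ^ k ∂μ) * (∫ ω, T ω ^ (N - k) ∂μ) * N.choose k := by
  have hpow (k l : ℕ) : IndepFun (fun ω => S ω ^ k) (fun ω => T ω ^ l) μ :=
    hST.comp (measurable_id.pow_const k) (measurable_id.pow_const l)
  simp_rw [add_pow]
  rw [integral_finsetSum]
  · refine Finset.sum_congr rfl fun k _ => ?_
    rw [integral_mul_const, (hpow k (N - k)).integral_fun_mul_eq_mul_integral
      (hS.1.pow k) (hT.1.pow (N - k))]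
  · intro k hk
    refine ((hpow k (N - k)).integrable_mul (hS.integrable_pow_of_le ?_)
      (hT.integrable_pow_of_le (Nat.sub_le N k))).mul_const _
    exact Nat.lt_succ_iff.mp (Finset.mem_range.mp hk)

variable [IsProbabilityMeasure μ]

lemma ProbabilityTheory.IndepFun.integral_add_pow_four_of_integral_eq_zero {S T : Ω → ℝ}
    (hST : IndepFun S T μ) (hS : MemLp S 4 μ) (hT : MemLp T 4 μ) (hS0 : ∫ ω, S ω ∂μ = 0)
    (hT0 : ∫ ω, T ω ∂μ = 0) :
    ∫ ω, (S ω + T ω) ^ 4 ∂μ =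
      ∫ ω, S ω ^ 4 ∂μ + 6 * (∫ ω, S ω ^ 2 ∂μ) * (∫ ω, T ω ^ 2 ∂μ) + ∫ ω, T ω ^ 4 ∂μ := by
  rw [hST.integral_add_pow (N := 4) (by exact_mod_cast hS) (by exact_mod_cast hT)]
  simp only [Nat.reduceAdd, Finset.sum_range_succ, Finset.range_one, Finset.sum_singleton,
    pow_zero, integral_const, probReal_univ, smul_eq_mul, mul_one, tsub_zero, one_mul, Nat.choose,
    Nat.cast_one, pow_one, hS0, Nat.add_one_sub_one, zero_mul, add_zero, Nat.cast_ofNat,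
    Nat.reduceSub, hT0, mul_zero, tsub_self]
  ring

variable {ι : Type*} {Y : ι → Ω → ℝ}

lemma ProbabilityTheory.iIndepFun.integral_sum_sq (hindep : iIndepFun Y μ)
    (hL2 : ∀ i, MemLp (Y i) 2 μ) (hmean : ∀ i, ∫ ω, Y i ω ∂μ = 0) (s : Finset ι) :
    ∫ ω, (∑ i ∈ s, Y i ω) ^ 2 ∂μ = ∑ i ∈ s, ∫ ω, Y i ω ^ 2 ∂μ := by
  have hvar := IndepFun.variance_sum (s := s) (fun i _ => hL2 i)
    (fun i _ j _ hij => hindep.indepFun hij)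
  have hsum0 : ∫ ω, ∑ i ∈ s, Y i ω ∂μ = 0 := by
    rw [integral_finsetSum s fun i _ => (hL2 i).integrable one_le_two]
    simp [hmean]
  rw [Finset.sum_fn, variance_of_integral_eq_zero
    (memLp_finsetSum s fun i _ => hL2 i).1.aemeasurable hsum0] at hvar
  simpa [variance_of_integral_eq_zero (hL2 _).1.aemeasurable (hmean _)] using hvar

lemma ProbabilityTheory.iIndepFun.integral_sum_pow_four_le (hmeas : ∀ i, Measurable (Y i))
    (hindep : iIndepFun Y μ) (hL4 : ∀ i, MemLp (Y i) 4 μ) (hmean : ∀ i, ∫ ω, Y i ω ∂μ = 0)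
    {K : ℝ} (hK0 : 0 ≤ K) (hK : ∀ i, ∫ ω, Y i ω ^ 4 ∂μ ≤ K * (∫ ω, Y i ω ^ 2 ∂μ) ^ 2)
    (s : Finset ι) :
    ∫ ω, (∑ i ∈ s, Y i ω) ^ 4 ∂μ ≤ (K + 3) * (∑ i ∈ s, ∫ ω, Y i ω ^ 2 ∂μ) ^ 2 := by
  classical
  induction s using Finset.induction_on with
  | empty => simp
  | @insert j s hj ih =>
    set S : Ω → ℝ := fun ω => ∑ i ∈ s, Y i ω
    have hindep_S : IndepFun (Y j) S μ := by
      have h := hindep.indepFun_finsetSum_of_notMem hmeas hj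
      rw [Finset.sum_fn] at h
      exact h.symm
    have hS4 : MemLp S 4 μ := memLp_finsetSum s fun i _ => hL4 i
    have hS0 : ∫ ω, S ω ∂μ = 0 := by
      rw [integral_finsetSum s fun i _ => (hL4 i).integrable (by norm_num)]
      simp [hmean]
    have hS2 : ∫ ω, S ω ^ 2 ∂μ = ∑ i ∈ s, ∫ ω, Y i ω ^ 2 ∂μ :=
      hindep.integral_sum_sq (fun i => (hL4 i).mono_exponent (by norm_num)) hmean s
    have hY2 : 0 ≤ ∫ ω, Y j ω ^ 2 ∂μ := integral_nonneg fun ω => sq_nonneg _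
    have hsum2 : 0 ≤ ∑ i ∈ s, ∫ ω, Y i ω ^ 2 ∂μ := hS2 ▸ integral_nonneg fun ω => sq_nonneg _
    simp only [Finset.sum_insert hj]
    rw [hindep_S.integral_add_pow_four_of_integral_eq_zero (hL4 j) hS4 (hmean j) hS0, hS2]
    nlinarith [hK j, mul_nonneg hK0 (mul_nonneg hY2 hsum2), mul_nonneg hY2 hsum2]

end Moments

lemma MeasureTheory.ae_tendsto_zero_of_summable_integral_norm_pow {Ω E : Type*}
    [MeasurableSpace Ω] {μ : Measure Ω} [NormedAddCommGroup E] {Y : ℕ → Ω → E} {k : ℕ}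
    (hk : k ≠ 0) (hY : ∀ m, MemLp (Y m) k μ)
    (hsum : Summable fun m => ∫ ω, ‖Y m ω‖ ^ k ∂μ) :
    ∀ᵐ ω ∂μ, Tendsto (fun m => Y m ω) atTop (𝓝 0) := by
  have hint (m : ℕ) := (hY m).integrable_norm_pow hk
  have htsum : ∑' m, eLpNorm (fun ω => ‖Y m ω‖ ^ k) 1 μ ≠ ⊤ := by
    simp_rw [eLpNorm_one_eq_lintegral_enorm, ← ofReal_integral_norm_eq_lintegral_enorm (hint _)]
    rw [← ENNReal.ofReal_tsum_of_nonneg (fun m => integral_nonneg fun ω => norm_nonneg _)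
      (by simpa only [norm_pow, norm_norm] using hsum)]
    exact ENNReal.ofReal_ne_top
  filter_upwards [summable_norm_of_tsum_eLpNorm_ne_top le_rfl (fun m => (hint m).1) htsum]
    with ω hω
  have hpow : Tendsto (fun m => ‖Y m ω‖ ^ k) atTop (𝓝 0) := by
    simpa only [norm_pow, norm_norm] using hω.tendsto_atTop_zero
  have hroot := ((Real.continuous_rpow_const (inv_nonneg.mpr (Nat.cast_nonneg k))).tendsto
    0).comp hpow
  rw [Real.zero_rpow (by positivity)] at hroot
  refine tendsto_zero_iff_norm_tendsto_zero.mpr (hroot.congr fun m => ?_)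
  exact Real.pow_rpow_inv_natCast (norm_nonneg _) hk

lemma summable_inv_sq_of_tendsto_div {p : ℕ → ℕ} {c : ℝ}
    (hp : Tendsto (fun m : ℕ => (m : ℝ) / p m) atTop (𝓝 c)) :
    Summable fun m => ((p m : ℝ) ^ 2)⁻¹ := by
  refine Summable.of_norm_bounded_eventually_nat
    ((Real.summable_nat_pow_inv.mpr one_lt_two).mul_left ((c + 1) ^ 2)) ?_
  filter_upwards [hp.eventually (gt_mem_nhds (lt_add_one c)), eventually_ge_atTop 1]
    with m hlt hm
  rw [Real.norm_eq_abs, abs_of_nonneg (by positivity)]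
  rcases (p m).eq_zero_or_pos with h0 | hpos
  · rw [h0, Nat.cast_zero, zero_pow two_ne_zero, _root_.inv_zero]
    positivity
  have hp0 : (0 : ℝ) < p m := by exact_mod_cast hpos
  have hm0 : (0 : ℝ) < m := by exact_mod_cast hm
  have hle : (m : ℝ) ≤ (c + 1) * p m := ((div_lt_iff₀ hp0).mp hlt).le
  rw [← div_eq_mul_inv, inv_eq_one_div, div_le_div_iff₀ (by positivity) (by positivity), one_mul]
  calc (m : ℝ) ^ 2 ≤ ((c + 1) * p m) ^ 2 := pow_le_pow_left₀ hm0.le hle 2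
    _ = (c + 1) ^ 2 * (p m) ^ 2 := mul_pow _ _ _

lemma Matrix.trace_mul_transpose_of_forall_eq_one {m n R : Type*} [Fintype m] [Fintype n]
    [NonAssocSemiring R] {N U : Matrix m n R} (hU : ∀ i j, U i j = 1) :
    (N * Uᵀ).trace = ∑ i, ∑ j, N i j := by
  simp [trace, mul_apply, hU]

lemma Matrix.sum_sum_mul_apply {l m n R : Type*} [Fintype l] [Fintype m] [Fintype n]
    [CommSemiring R] (M : Matrix l m R) (E : Matrix m n R) :
    ∑ i, ∑ j, (M * E) i j = ∑ k, ∑ j, (∑ i, M i k) * E k j := by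
  simp only [mul_apply, Finset.sum_mul]
  calc _ = ∑ i, ∑ k, ∑ j, M i k * E k j := Finset.sum_congr rfl fun i _ => Finset.sum_comm
    _ = ∑ k, ∑ i, ∑ j, M i k * E k j := Finset.sum_comm
    _ = _ := Finset.sum_congr rfl fun k _ => Finset.sum_comm

lemma Matrix.sum_sq_sum_apply_le_card_mul_trace {m n : Type*} [Fintype m] [Fintype n]
    (S : Matrix m n ℝ) :
    ∑ k, (∑ i, S i k) ^ 2 ≤ Fintype.card m * (Sᵀ * S).trace := by
  simp only [trace, diag, mul_apply, transpose_apply, ← sq, Finset.mul_sum]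
  refine Finset.sum_le_sum fun k _ => ?_
  simpa [Finset.mul_sum] using sq_sum_le_card_mul_sum_sq (s := Finset.univ) (f := fun i => S i k)

lemma Matrix.sum_sq_sum_apply_le_of_one_div_mul_trace_le {m : ℕ} {S : Matrix (Fin m) (Fin m) ℝ}
    (hS : S.IsSymm) {C : ℝ} (hC : 1 / (m : ℝ) * (S * S).trace ≤ C) :
    ∑ k, (∑ i, S i k) ^ 2 ≤ C * m ^ 2 := by
  have h := sum_sq_sum_apply_le_card_mul_trace S
  rw [hS.eq, Fintype.card_fin] at h
  rcases m.eq_zero_or_pos with rfl | hm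
  · simp
  rw [one_div, inv_mul_le_iff₀ (by exact_mod_cast hm)] at hC
  nlinarith

lemma integral_sum_mul_pow_four_le {Ω : Type*} [MeasurableSpace Ω] {μ : Measure Ω}
    [IsProbabilityMeasure μ] {e : ℕ → ℕ → Ω → ℝ} (hmeas : ∀ i j, Measurable (e i j))
    (hindep : iIndepFun (fun q : ℕ × ℕ => e q.1 q.2) μ) (hL4 : ∀ i j, MemLp (e i j) 4 μ)
    (hmean : ∀ i j, ∫ ω, e i j ω ∂μ = 0) (hvar : ∀ i j, ∫ ω, e i j ω ^ 2 ∂μ = 1)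
    {K : ℝ} (hK0 : 0 ≤ K) (hK : ∀ i j, ∫ ω, e i j ω ^ 4 ∂μ ≤ K) {m : ℕ} (p : ℕ)
    (w : Fin m → ℝ) :
    ∫ ω, (∑ k : Fin m, ∑ j : Fin p, w k * e k j ω) ^ 4 ∂μ ≤
      (K + 3) * (p * ∑ k, w k ^ 2) ^ 2 := by
  set Y : Fin m × Fin p → Ω → ℝ := fun q ω => w q.1 * e q.1 q.2 ω
  have hinj : Function.Injective fun q : Fin m × Fin p => ((q.1 : ℕ), (q.2 : ℕ)) :=
    fun q q' h => Prod.ext (Fin.ext (Prod.ext_iff.mp h).1) (Fin.ext (Prod.ext_iff.mp h).2)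
  have hindepY : iIndepFun Y μ :=
    (hindep.precomp hinj).comp (fun q x => w q.1 * x) fun q => measurable_const.mul measurable_id
  have hY2 (q : Fin m × Fin p) : ∫ ω, Y q ω ^ 2 ∂μ = w q.1 ^ 2 := by
    simp only [Y, mul_pow, integral_const_mul, hvar, mul_one]
  have hY4 (q : Fin m × Fin p) : ∫ ω, Y q ω ^ 4 ∂μ ≤ K * (∫ ω, Y q ω ^ 2 ∂μ) ^ 2 := by
    rw [hY2]
    simp only [Y, mul_pow, integral_const_mul]
    nlinarith [hK q.1 q.2, pow_nonneg (sq_nonneg (w q.1)) 2]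
  have h := hindepY.integral_sum_pow_four_le (fun q => (hmeas _ _).const_mul _)
    (fun q => (hL4 _ _).const_mul _) (fun q => by simp [integral_const_mul, hmean]) hK0 hY4
    Finset.univ
  simp only [hY2, Fintype.sum_prod_type, Y, Finset.sum_const, Finset.card_univ,
    Fintype.card_fin, nsmul_eq_mul] at h
  rwa [← Finset.mul_sum] at h

lemma integral_inv_mul_sum_mul_pow_four_le {Ω : Type*} [MeasurableSpace Ω] {μ : Measure Ω}
    [IsProbabilityMeasure μ] {e : ℕ → ℕ → Ω → ℝ} (hmeas : ∀ i j, Measurable (e i j))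
    (hindep : iIndepFun (fun q : ℕ × ℕ => e q.1 q.2) μ) (hL4 : ∀ i j, MemLp (e i j) 4 μ)
    (hmean : ∀ i j, ∫ ω, e i j ω ∂μ = 0) (hvar : ∀ i j, ∫ ω, e i j ω ^ 2 ∂μ = 1)
    {K : ℝ} (hK0 : 0 ≤ K) (hK : ∀ i j, ∫ ω, e i j ω ^ 4 ∂μ ≤ K) {m : ℕ} (p : ℕ)
    (w : Fin m → ℝ) {C : ℝ} (hw : ∑ k, w k ^ 2 ≤ C * m ^ 2) :
    ∫ ω, ((m * p : ℝ)⁻¹ * ∑ k : Fin m, ∑ j : Fin p, w k * e k j ω) ^ 4 ∂μ ≤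
      (K + 3) * C ^ 2 * ((p : ℝ) ^ 2)⁻¹ := by
  have hD : 0 ≤ (K + 3) * C ^ 2 * ((p : ℝ) ^ 2)⁻¹ := by positivity
  rcases m.eq_zero_or_pos with rfl | hm
  · simpa using hD
  rcases p.eq_zero_or_pos with rfl | hp
  · simp
  have hm0 : (m : ℝ) ≠ 0 := by positivity
  have hp0 : (p : ℝ) ≠ 0 := by positivity
  simp only [mul_pow _ (∑ k : Fin m, _), integral_const_mul]
  calc _ ≤ ((m * p : ℝ)⁻¹) ^ 4 * ((K + 3) * (p * (C * m ^ 2)) ^ 2) := by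
        gcongr
        refine (integral_sum_mul_pow_four_le hmeas hindep hL4 hmean hvar hK0 hK p w).trans ?_
        gcongr
    _ = _ := by field_simp

theorem stmt7_general
    {Ω : Type*} [MeasureSpace Ω] [IsProbabilityMeasure (ℙ : Measure Ω)]
    (c : ℝ)
    (p : ℕ → ℕ)
    (hp : Tendsto (fun m : ℕ => (m : ℝ) / (p m : ℝ)) atTop (nhds c))
    (n : ℕ)
    (e : ℕ → ℕ → Ω → ℝ)
    (hmeas : ∀ i j, Measurable (e i j))
    (hindep : iIndepFun (fun q : ℕ × ℕ => e q.1 q.2) ℙ)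
    (hident : ∀ i j, IdentDistrib (e i j) (e 0 0) ℙ ℙ)
    (hmean : ∀ i j, ∫ ω, e i j ω = 0)
    (hvar : ∀ i j, ∫ ω, (e i j ω) ^ 2 = 1)
    (ε : ℝ) (hε : 0 < ε)
    (hmom : ∀ i j, Integrable (fun ω => |e i j ω| ^ ((4 : ℝ) + ε)))
    (Sig : ∀ m : ℕ, Matrix (Fin m) (Fin m) ℝ)
    (hSigTr : ∃ C : ℝ, ∀ m : ℕ, (1 / (m : ℝ)) * (Sig m).trace ≤ C)
    (Sqrt : ∀ m : ℕ, Matrix (Fin m) (Fin m) ℝ)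
    (hSqrtSymm : ∀ m, (Sqrt m).IsSymm)
    (hSqrtSq : ∀ m, Sqrt m * Sqrt m = Sig m)
    (A : ∀ m : ℕ, Matrix (Fin m) (Fin (p m)) ℝ)
    (U : ∀ m : ℕ, Matrix (Fin m) (Fin (p m)) ℝ)
    (hU : ∀ m i j, U m i j = 1)
    (Abar : ∀ m : ℕ, Ω → Matrix (Fin m) (Fin (p m)) ℝ)
    (hAbar : ∀ m ω, Abar m ω =
      A m + (1 / Real.sqrt n) •
      (Sqrt m * (Matrix.of fun i j => e i.val j.val ω : Matrix (Fin m) (Fin (p m)) ℝ))) :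
    ∀ᵐ ω, Tendsto
      (fun m : ℕ => (1 / (m * p m : ℝ)) * (Abar m ω * (U m)ᵀ).trace - (1 / (m * p m : ℝ)) * (A m * (U m)ᵀ).trace)
      atTop (nhds 0) := by
  obtain ⟨C, hC⟩ := hSigTr
  set K := ∫ ω, e 0 0 ω ^ 4
  have hK (i j : ℕ) : ∫ ω, e i j ω ^ 4 ≤ K :=
    ((hident i j).comp (measurable_id.pow_const 4)).integral_eq.le
  have hL4 (i j : ℕ) : MemLp (e i j) 4 := by
    exact_mod_cast memLp_of_integrable_abs_rpow (N := 4) (hmeas i j).aestronglyMeasurable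
      four_ne_zero (by push_cast; linarith) (hmom i j)
  have hcol (m : ℕ) : ∑ k, (∑ i, Sqrt m i k) ^ 2 ≤ C * m ^ 2 :=
    sum_sq_sum_apply_le_of_one_div_mul_trace_le (hSqrtSymm m) (hSqrtSq m ▸ hC m)
  set Y : ℕ → Ω → ℝ := fun m ω =>
    (1 / √n) * ((m * p m : ℝ)⁻¹ * ∑ k : Fin m, ∑ j : Fin (p m), (∑ i, Sqrt m i k) * e k j ω)
  have hdiff (m : ℕ) (ω : Ω) : (1 / (m * p m : ℝ)) * (Abar m ω * (U m)ᵀ).trace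
      - (1 / (m * p m : ℝ)) * (A m * (U m)ᵀ).trace = Y m ω := by
    simp only [hAbar, Matrix.add_mul, trace_add, smul_mul, trace_smul, smul_eq_mul,
      trace_mul_transpose_of_forall_eq_one (hU m), sum_sum_mul_apply, of_apply, Y]
    ring
  have hbound (m : ℕ) :
      ∫ ω, ‖Y m ω‖ ^ 4 ≤ (1 / √n) ^ 4 * ((K + 3) * C ^ 2 * ((p m : ℝ) ^ 2)⁻¹) := by
    simp only [Y, Real.norm_eq_abs, Even.pow_abs ⟨2, rfl⟩, mul_pow (1 / √n), integral_const_mul]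
    gcongr
    exact integral_inv_mul_sum_mul_pow_four_le hmeas hindep hL4 hmean hvar
      (integral_nonneg fun ω => by positivity) hK (p m) _ (hcol m)
  have hYL4 (m : ℕ) : MemLp (Y m) (4 : ℕ) :=
    ((memLp_finsetSum _ fun k _ => memLp_finsetSum _ fun j _ =>
      (hL4 _ _).const_mul _).const_mul _).const_mul _
  have hsum : Summable fun m => ∫ ω, ‖Y m ω‖ ^ 4 :=
    .of_nonneg_of_le (fun m => integral_nonneg fun ω => by positivity) hbound
      ((summable_inv_sq_of_tendsto_div hp).mul_left _ |>.mul_left _)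
  simpa only [hdiff] using ae_tendsto_zero_of_summable_integral_norm_pow four_ne_zero hYL4 hsum

/-- column-correlated noise: a.s. (1/(mp))·tr(Ā_m U_mᵀ) − (1/(mp))·tr(A_m U_mᵀ) → 0. -/
theorem stmt7
    {Ω : Type*} [MeasureSpace Ω] [IsProbabilityMeasure (ℙ : Measure Ω)]
    (c : ℝ) (hc : 0 < c)
    (p : ℕ → ℕ)
    (hp : Tendsto (fun m : ℕ => (m : ℝ) / (p m : ℝ)) atTop (nhds c))
    (n : ℕ) (hn : 2 ≤ n)
    (e : ℕ → ℕ → Ω → ℝ)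
    (hmeas : ∀ i j, Measurable (e i j))
    (hindep : iIndepFun (fun q : ℕ × ℕ => e q.1 q.2) ℙ)
    (hident : ∀ i j, IdentDistrib (e i j) (e 0 0) ℙ ℙ)
    (hint : ∀ i j, Integrable (e i j))
    (hsq : ∀ i j, Integrable (fun ω => (e i j ω) ^ 2))
    (hmean : ∀ i j, ∫ ω, e i j ω = 0)
    (hvar : ∀ i j, ∫ ω, (e i j ω) ^ 2 = 1)
    (ε : ℝ) (hε : 0 < ε)
    (hmom : ∀ i j, Integrable (fun ω => |e i j ω| ^ ((4 : ℝ) + ε)))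
    (Sig : ∀ m : ℕ, Matrix (Fin m) (Fin m) ℝ)
    (hSigSymm : ∀ m, (Sig m).IsSymm)
    (hSigPD : ∀ m, (Sig m).PosDef)
    (hSigTr : ∃ C : ℝ, ∀ m : ℕ, (1 / (m : ℝ)) * (Sig m).trace ≤ C)
    (Sqrt : ∀ m : ℕ, Matrix (Fin m) (Fin m) ℝ)
    (hSqrtSymm : ∀ m, (Sqrt m).IsSymm)
    (hSqrtPD : ∀ m, (Sqrt m).PosDef)
    (hSqrtSq : ∀ m, Sqrt m * Sqrt m = Sig m)
    (A : ∀ m : ℕ, Matrix (Fin m) (Fin (p m)) ℝ)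
    (hA : ∃ C : ℝ, ∀ m : ℕ, (1 / (m * p m : ℝ)) * (A m * (A m)ᵀ).trace ≤ C)
    (U : ∀ m : ℕ, Matrix (Fin m) (Fin (p m)) ℝ)
    (hU : ∀ m i j, U m i j = 1)
    (Abar : ∀ m : ℕ, Ω → Matrix (Fin m) (Fin (p m)) ℝ)
    (hAbar : ∀ m ω, Abar m ω =
      A m + (1 / Real.sqrt n) •
      (Sqrt m * (Matrix.of fun i j => e i.val j.val ω : Matrix (Fin m) (Fin (p m)) ℝ))) :
    ∀ᵐ ω, Tendsto
      (fun m : ℕ => (1 / (m * p m : ℝ)) * (Abar m ω * (U m)ᵀ).trace - (1 / (m * p m : ℝ)) * (A m * (U m)ᵀ).trace)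
      atTop (nhds 0) :=
  stmt7_general c p hp n e hmeas hindep hident hmean hvar ε hε hmom Sig hSigTr Sqrt hSqrtSymm
    hSqrtSq A U hU Abar hAbar
end

section
/- Almost surely, (1/(m·p(m)))·Σ_{1 ≤ i ≤ m, 1 ≤ j ≤ p(m)} e_{ij} → 0 as m → ∞. -/
/-!
Let `Z_m` be the normalised double sum. By independence and centring, `𝔼[Z_m²] = 1/(m·p(m))`,
which equals `(m/p(m))/m² = O(1/m²)` and is therefore summable. Hence `∑ Z_m²` has finite
expectation, so it is almost surely finite, and its terms tend to zero almost surely.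
-/

open MeasureTheory ProbabilityTheory Filter Topology

section

variable {α : Type*} [MeasurableSpace α] {μ : Measure α}

theorem ae_tendsto_zero_of_summable_integral {Y : ℕ → α → ℝ} (hY : ∀ n, Integrable (Y n) μ)
    (hY_nonneg : ∀ n, 0 ≤ᵐ[μ] Y n) (hsum : Summable fun n => ∫ x, Y n x ∂μ) :
    ∀ᵐ x ∂μ, Tendsto (fun n => Y n x) atTop (𝓝 0) := by
  have hmeas : ∀ n, AEMeasurable (fun x => ENNReal.ofReal (Y n x)) μ :=
    fun n => (hY n).aemeasurable.ennreal_ofReal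
  have hlint : ∫⁻ x, ∑' n, ENNReal.ofReal (Y n x) ∂μ ≠ ⊤ := by
    rw [lintegral_tsum hmeas]
    simp_rw [← ofReal_integral_eq_lintegral_ofReal (hY _) (hY_nonneg _)]
    rw [← ENNReal.ofReal_tsum_of_nonneg (fun n => integral_nonneg_of_ae (hY_nonneg n)) hsum]
    exact ENNReal.ofReal_ne_top
  filter_upwards [ae_lt_top' (AEMeasurable.tsum hmeas) hlint, ae_all_iff.2 hY_nonneg]
    with x hx hx_nonneg
  have := (ENNReal.tendsto_toReal ENNReal.zero_ne_top).comp
    (ENNReal.tendsto_atTop_zero_of_tsum_ne_top hx.ne)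
  simpa [Function.comp_def, ENNReal.toReal_ofReal (hx_nonneg _)] using this

theorem ae_tendsto_zero_of_summable_integral_sq {X : ℕ → α → ℝ}
    (hX : ∀ n, Integrable (fun x => X n x ^ 2) μ)
    (hsum : Summable fun n => ∫ x, X n x ^ 2 ∂μ) :
    ∀ᵐ x ∂μ, Tendsto (fun n => X n x) atTop (𝓝 0) := by
  filter_upwards [ae_tendsto_zero_of_summable_integral hX
    (fun n => ae_of_all _ fun x => sq_nonneg _) hsum] with x hx
  rw [tendsto_zero_iff_abs_tendsto_zero]
  simpa [Function.comp_def, Real.sqrt_sq_eq_abs] using (Real.continuous_sqrt.tendsto 0).comp hx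

theorem integral_sum_sq_of_pairwise_indepFun [IsFiniteMeasure μ] {ι : Type*} {X : ι → α → ℝ}
    (hX : ∀ i, MemLp (X i) 2 μ) (hindep : Pairwise fun i j => IndepFun (X i) (X j) μ)
    (hmean : ∀ i, ∫ x, X i x ∂μ = 0) (s : Finset ι) :
    ∫ x, (∑ i ∈ s, X i x) ^ 2 ∂μ = ∑ i ∈ s, ∫ x, X i x ^ 2 ∂μ := by
  have hsum_mean : ∫ x, (∑ i ∈ s, X i) x ∂μ = 0 := by
    simp only [Finset.sum_apply]
    rw [integral_finsetSum s fun i _ => (hX i).integrable one_le_two]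
    simp [hmean]
  have hvar := IndepFun.variance_sum (s := s) (fun i _ => hX i) fun i _ j _ hij => hindep hij
  rw [variance_of_integral_eq_zero (memLp_finsetSum' s fun i _ => hX i).aemeasurable
    hsum_mean] at hvar
  simpa [Finset.sum_apply, variance_of_integral_eq_zero (hX _).aemeasurable (hmean _)] using hvar

end

theorem summable_one_div_mul_of_eventually_div_le {p : ℕ → ℕ} {C : ℝ}
    (hp : ∀ᶠ m : ℕ in atTop, (m : ℝ) / p m ≤ C) :
    Summable fun m : ℕ => 1 / ((m : ℝ) * p m) := by
  refine ((Real.summable_one_div_nat_pow.2 one_lt_two).mul_left C).of_norm_bounded_eventually_nat ?_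
  filter_upwards [hp] with m hm
  have hdiv : 1 / ((m : ℝ) * p m) = ((m : ℝ) / p m) / (m : ℝ) ^ 2 := by field_simp
  rw [Real.norm_of_nonneg (by positivity), hdiv, mul_one_div]
  gcongr

theorem stmt13_general
    {Ω : Type*} [MeasureSpace Ω] [IsProbabilityMeasure (ℙ : Measure Ω)]
    (c : ℝ)
    (p : ℕ → ℕ)
    (hp : Tendsto (fun m : ℕ => (m : ℝ) / (p m : ℝ)) atTop (nhds c))
    (e : ℕ → ℕ → Ω → ℝ)
    (hmeas : ∀ i j, Measurable (e i j))
    (hindep : iIndepFun (fun q : ℕ × ℕ => e q.1 q.2) ℙ)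
    (hsq : ∀ i j, Integrable (fun ω => (e i j ω) ^ 2))
    (hmean : ∀ i j, ∫ ω, e i j ω = 0)
    (hvar : ∀ i j, ∫ ω, (e i j ω) ^ 2 = 1) :
    ∀ᵐ ω, Tendsto
      (fun m : ℕ => (1 / (m * p m : ℝ)) * ∑ i : Fin m, ∑ j : Fin (p m), e i j ω)
      atTop (nhds 0) := by
  have hL2 : ∀ q : ℕ × ℕ, MemLp (e q.1 q.2) 2 ℙ := fun q =>
    (memLp_two_iff_integrable_sq (hmeas q.1 q.2).aestronglyMeasurable).2 (hsq q.1 q.2)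
  have hsum_eq : ∀ m ω, ∑ i : Fin m, ∑ j : Fin (p m), e i j ω
      = ∑ q ∈ Finset.range m ×ˢ Finset.range (p m), e q.1 q.2 ω := by
    intro m ω
    simp [Finset.sum_product, Finset.sum_range]
  have hsecond_moment : ∀ m, ∫ ω, (∑ q ∈ Finset.range m ×ˢ Finset.range (p m), e q.1 q.2 ω) ^ 2
      = (m * p m : ℝ) := by
    intro m
    rw [integral_sum_sq_of_pairwise_indepFun hL2 (fun _ _ h => hindep.indepFun h)
      (fun q => hmean q.1 q.2)]
    simp [hvar]
  apply ae_tendsto_zero_of_summable_integral_sq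
  · intro m
    have := ((memLp_finsetSum' (Finset.range m ×ˢ Finset.range (p m)) fun q _ => hL2 q
      ).integrable_sq).const_mul ((1 / (m * p m : ℝ)) ^ 2)
    simpa only [hsum_eq, mul_pow, Finset.sum_apply] using this
  · refine (summable_one_div_mul_of_eventually_div_le
      (hp.eventually (eventually_le_nhds (lt_add_one c)))).congr fun m => ?_
    simp only [hsum_eq, mul_pow, integral_const_mul, hsecond_moment]
    field_simp

/-- SLLN for a doubly indexed i.i.d. family with mean 0 and variance 1:
almost surely `(1/(m·p(m))) Σ_{i<m, j<p(m)} e_{ij} → 0` as `m → ∞`. -/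
theorem stmt13
    {Ω : Type*} [MeasureSpace Ω] [IsProbabilityMeasure (ℙ : Measure Ω)]
    (c : ℝ) (hc : 0 < c)
    (p : ℕ → ℕ)
    (hp : Tendsto (fun m : ℕ => (m : ℝ) / (p m : ℝ)) atTop (nhds c))
    (e : ℕ → ℕ → Ω → ℝ)
    (hmeas : ∀ i j, Measurable (e i j))
    (hindep : iIndepFun (fun q : ℕ × ℕ => e q.1 q.2) ℙ)
    (hident : ∀ i j, IdentDistrib (e i j) (e 0 0) ℙ ℙ)
    (hint : ∀ i j, Integrable (e i j))
    (hsq : ∀ i j, Integrable (fun ω => (e i j ω) ^ 2))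
    (hmean : ∀ i j, ∫ ω, e i j ω = 0)
    (hvar : ∀ i j, ∫ ω, (e i j ω) ^ 2 = 1) :
    ∀ᵐ ω, Tendsto
      (fun m : ℕ => (1 / (m * p m : ℝ)) * ∑ i : Fin m, ∑ j : Fin (p m), e i j ω)
      atTop (nhds 0) :=
  stmt13_general c p hp e hmeas hindep hsq hmean hvar
end
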